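/- arXiv:gr-qc/9512039 — 3 statements merged into one kernel-verified Lean document; each statement's English description precedes it below -/
import Mathlib

section
/- On the region Ω = {x : r(x) > 0}, the retarded distance r is smooth and its gradient satisfies r_{,a} = ∂r/∂x^a = −v_a + (1 + r a·k) k_a for a = 0,1,2,3, where v_a = η_{ab}v^b and k_a = η_{ab}k^b. -/
open scoped BigOperators

noncomputable section

/-- The Minkowski metric η = diag(−1,1,1,1) on ℝ⁴. -/
def eta (i j : Fin 4) : ℝ := if i = j then (if i = 0 then -1 else 1) else 0

/-- Minkowski inner product a·b = η_{ij} a^i b^j. -/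
def mdot (a b : Fin 4 → ℝ) : ℝ := ∑ i, ∑ j, eta i j * a i * b j

/-- Lowering an index with η : k_i = η_{ij} k^j. -/
def lo (a : Fin 4 → ℝ) (i : Fin 4) : ℝ := ∑ j, eta i j * a j

/-!
The retarded time `u x` is the root `τ` of `F (x, τ) = (x - z τ)·(x - z τ)` lying in the past of
`x`. On `Ω` we have `∂F/∂τ = -2 v·(x - z τ) = 2 r ≠ 0`, so the implicit function theorem, combined
with the uniqueness of the retarded root, makes `u` smooth there, and with it
`r = -v(u)·(x - z(u))`. Differentiating `F (x, u x) = 0` gives `∂_a u = -k_a`, and the product rule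
for `r`, together with `v·v = -1` and `x - z(u) = r k`, gives the gradient.
-/

open Filter Topology
open scoped ContDiff

theorem mdot_eq (a b : Fin 4 → ℝ) :
    mdot a b = -(a 0 * b 0) + a 1 * b 1 + a 2 * b 2 + a 3 * b 3 := by
  simp [mdot, eta, Fin.sum_univ_four]

theorem mdot_comm (a b : Fin 4 → ℝ) : mdot a b = mdot b a := by
  simp only [mdot_eq]; ring

theorem mdot_add_left (a b c : Fin 4 → ℝ) : mdot (a + b) c = mdot a c + mdot b c := by
  simp only [mdot_eq, Pi.add_apply]; ring

theorem mdot_smul_left (t : ℝ) (a b : Fin 4 → ℝ) : mdot (t • a) b = t * mdot a b := by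
  simp only [mdot_eq, Pi.smul_apply, smul_eq_mul]; ring

theorem mdot_add_right (a b c : Fin 4 → ℝ) : mdot a (b + c) = mdot a b + mdot a c := by
  simp only [mdot_comm a, mdot_add_left]

theorem mdot_smul_right (t : ℝ) (a b : Fin 4 → ℝ) : mdot a (t • b) = t * mdot a b := by
  simp only [mdot_comm a, mdot_smul_left]

theorem mdot_sub_right (a b c : Fin 4 → ℝ) : mdot a (b - c) = mdot a b - mdot a c := by
  simp only [mdot_eq, Pi.sub_apply]; ring

theorem lo_eq_mdot_single (b : Fin 4 → ℝ) (a : Fin 4) : lo b a = mdot b (Pi.single a 1) := by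
  fin_cases a <;> simp [lo, mdot_eq, eta]

theorem eq_zero_of_mdot_self_eq_zero {w : Fin 4 → ℝ} (hnull : mdot w w = 0) (h0 : w 0 = 0) :
    w = 0 := by
  rw [mdot_eq, h0] at hnull
  have h1 : w 1 = 0 := by nlinarith [sq_nonneg (w 1), sq_nonneg (w 2), sq_nonneg (w 3)]
  have h2 : w 2 = 0 := by nlinarith [sq_nonneg (w 1), sq_nonneg (w 2), sq_nonneg (w 3)]
  have h3 : w 3 = 0 := by nlinarith [sq_nonneg (w 1), sq_nonneg (w 2), sq_nonneg (w 3)]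
  ext i; fin_cases i <;> assumption

def minkowskiForm : (Fin 4 → ℝ) →L[ℝ] (Fin 4 → ℝ) →L[ℝ] ℝ :=
  LinearMap.toContinuousLinearMap <| LinearMap.toContinuousLinearMap.toLinearMap ∘ₗ
    LinearMap.mk₂ ℝ mdot mdot_add_left mdot_smul_left mdot_add_right mdot_smul_right

@[simp]
theorem minkowskiForm_apply (a b : Fin 4 → ℝ) : minkowskiForm a b = mdot a b := rfl

theorem ContinuousLinearMap.isInvertible_smulRight_one {𝕜 : Type*} [NontriviallyNormedField 𝕜]
    {c : 𝕜} (hc : c ≠ 0) : (smulRight (1 : 𝕜 →L[𝕜] 𝕜) c).IsInvertible :=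
  ⟨ContinuousLinearEquiv.unitsEquivAut 𝕜 (Units.mk0 c hc), by ext; simp⟩

theorem contDiffAt_of_eventually_unique_implicit {𝕜 : Type*} [RCLike 𝕜]
    {E : Type*} [NormedAddCommGroup E] [NormedSpace 𝕜 E] [CompleteSpace E]
    {f : E × 𝕜 → 𝕜} {g : E → 𝕜} {x₀ : E} {c : 𝕜} {n : WithTop ℕ∞}
    (hf : ContDiffAt 𝕜 n f (x₀, g x₀)) (hn : n ≠ 0)
    (hc : HasDerivAt (fun τ => f (x₀, τ)) c (g x₀)) (hc0 : c ≠ 0)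
    (huniq : ∀ᶠ p in 𝓝 (x₀, g x₀), f p = f (x₀, g x₀) → p.2 = g p.1) :
    ContDiffAt 𝕜 n g x₀ := by
  have hpartial : fderiv 𝕜 f (x₀, g x₀) ∘L .inr 𝕜 E 𝕜 = .smulRight 1 c :=
    (((hf.differentiableAt hn).hasFDerivAt.comp (g x₀)
      (hasFDerivAt_prodMk_right x₀ (g x₀))).unique hc.hasFDerivAt)
  have hinv := hpartial ▸ ContinuousLinearMap.isInvertible_smulRight_one hc0
  set ψ := hf.implicitFunction hn hinv
  have hψ : ContDiffAt 𝕜 n ψ x₀ := hf.contDiffAt_implicitFunction hn hinv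
  have hgraph : Tendsto (fun x => (x, ψ x)) (𝓝 x₀) (𝓝 (x₀, g x₀)) := by
    simpa [ψ, hf.implicitFunction_apply_self hn hinv] using
      (continuousAt_id.prodMk hψ.continuousAt).tendsto
  refine hψ.congr_of_eventuallyEq ?_
  filter_upwards [hf.eventually_apply_implicitFunction hn hinv, hgraph.eventually huniq]
    with x hsol huniq_x
  exact (huniq_x hsol).symm

section Calculus

variable {E : Type*} [NormedAddCommGroup E] [NormedSpace ℝ E] {f g : E → Fin 4 → ℝ}
  {f' g' : E →L[ℝ] Fin 4 → ℝ} {x : E}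

theorem HasFDerivAt.mdot (hf : HasFDerivAt f f' x) (hg : HasFDerivAt g g' x) :
    HasFDerivAt (fun y => mdot (f y) (g y))
      ((minkowskiForm (f x)).comp g' + (minkowskiForm.flip (g x)).comp f') x :=
  minkowskiForm.hasFDerivAt_of_bilinear hf hg

theorem HasDerivAt.mdot {f g : ℝ → Fin 4 → ℝ} {f' g' : Fin 4 → ℝ} {t : ℝ}
    (hf : HasDerivAt f f' t) (hg : HasDerivAt g g' t) :
    HasDerivAt (fun s => mdot (f s) (g s)) (mdot (f t) g' + mdot f' (g t)) t := by
  rw [hasDerivAt_iff_hasFDerivAt]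
  refine (hf.hasFDerivAt.mdot hg.hasFDerivAt).congr_fderiv ?_
  ext
  simp [add_comm]

theorem ContDiffAt.mdot {n : WithTop ℕ∞} (hf : ContDiffAt ℝ n f x) (hg : ContDiffAt ℝ n g x) :
    ContDiffAt ℝ n (fun y => mdot (f y) (g y)) x :=
  minkowskiForm.isBoundedBilinearMap.contDiff.contDiffAt.comp x (hf.prodMk hg)

end Calculus

theorem ContDiff.contDiff_and_hasDerivAt_of_apply_eq_deriv {𝕜 : Type*} [NontriviallyNormedField 𝕜]
    {ι : Type*} [Fintype ι] {f f' : 𝕜 → ι → 𝕜} (hf : ContDiff 𝕜 ∞ f)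
    (h : ∀ t i, f' t i = deriv (fun s => f s i) t) :
    ContDiff 𝕜 ∞ f' ∧ ∀ t, HasDerivAt f (f' t) t := by
  obtain ⟨hdiff, hderiv⟩ := contDiff_infty_iff_deriv.mp hf
  have hf' : f' = deriv f := by
    ext t i
    rw [h, deriv_pi fun j => (differentiable_pi.mp hdiff j) t]
  exact hf' ▸ ⟨hderiv, fun t => (hdiff t).hasDerivAt⟩

theorem pos_of_mdot_self_eq_zero {w b : Fin 4 → ℝ} (hnull : mdot w w = 0) (h0 : 0 ≤ w 0)
    (hb : mdot b w ≠ 0) : 0 < w 0 :=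
  h0.lt_of_ne fun h => hb (by simp [eq_zero_of_mdot_self_eq_zero hnull h.symm, mdot_eq])

section RetardedTime

variable {z v acc : ℝ → Fin 4 → ℝ} {u : (Fin 4 → ℝ) → ℝ} {x₀ : Fin 4 → ℝ}

theorem contDiffAt_retardedTime {n : WithTop ℕ∞} (hz : ContDiff ℝ n z) (hn : n ≠ 0)
    (hzv : ∀ τ, HasDerivAt z (v τ) τ)
    (hnull : ∀ x, mdot (x - z (u x)) (x - z (u x)) = 0)
    (huniq : ∀ x τ, mdot (x - z τ) (x - z τ) = 0 → z τ 0 ≤ x 0 → τ = u x)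
    (hle : z (u x₀) 0 ≤ x₀ 0) (hnondeg : mdot (v (u x₀)) (x₀ - z (u x₀)) ≠ 0) :
    ContDiffAt ℝ n u x₀ := by
  have hpast : z (u x₀) 0 < x₀ 0 :=
    sub_pos.mp (pos_of_mdot_self_eq_zero (hnull x₀) (sub_nonneg.mpr hle) hnondeg)
  have hsep_smooth : ContDiff ℝ n fun p : (Fin 4 → ℝ) × ℝ => p.1 - z p.2 :=
    contDiff_fst.sub (hz.comp contDiff_snd)
  have hpartial : HasDerivAt (fun τ => mdot (x₀ - z τ) (x₀ - z τ))
      (-2 * mdot (v (u x₀)) (x₀ - z (u x₀))) (u x₀) := by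
    have hw := (hzv (u x₀)).const_sub x₀
    convert hw.mdot hw using 1
    simp only [mdot_eq, Pi.neg_apply, Pi.sub_apply]
    ring
  have hpast_nhds : ∀ᶠ p in 𝓝 (x₀, u x₀), z p.2 0 < p.1 0 :=
    (isOpen_lt ((continuous_apply 0).comp (hz.continuous.comp continuous_snd))
      ((continuous_apply 0).comp continuous_fst)).mem_nhds hpast
  refine contDiffAt_of_eventually_unique_implicit (hsep_smooth.contDiffAt.mdot hsep_smooth.contDiffAt) hn
    hpartial (by simpa using hnondeg) ?_
  filter_upwards [hpast_nhds] with p hp hnull_p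
  exact huniq p.1 p.2 (hnull_p.trans (hnull x₀)) hp.le

theorem contDiffAt_retardedDistance {n : WithTop ℕ∞} (hz : ContDiff ℝ n z)
    (hv : ContDiff ℝ n v) (hu : ContDiffAt ℝ n u x₀) :
    ContDiffAt ℝ n (fun x => -mdot (v (u x)) (x - z (u x))) x₀ :=
  ((hv.contDiffAt.comp x₀ hu).mdot (contDiffAt_id.sub (hz.contDiffAt.comp x₀ hu))).neg

theorem mdot_mul_fderiv_retardedTime {u' : (Fin 4 → ℝ) →L[ℝ] ℝ}
    (hzv : ∀ τ, HasDerivAt z (v τ) τ)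
    (hnull : ∀ x, mdot (x - z (u x)) (x - z (u x)) = 0) (hu : HasFDerivAt u u' x₀)
    (h : Fin 4 → ℝ) :
    mdot (v (u x₀)) (x₀ - z (u x₀)) * u' h = mdot (x₀ - z (u x₀)) h := by
  have hw : HasFDerivAt (fun x => x - z (u x)) _ x₀ :=
    (hasFDerivAt_id x₀).sub ((hzv (u x₀)).hasFDerivAt.comp x₀ hu)
  have hzero := (hw.mdot hw).unique (funext hnull ▸ hasFDerivAt_const 0 x₀)
  have hzero_h := congrArg (· h) hzero
  simp only [add_apply, ContinuousLinearMap.comp_apply, sub_apply, ContinuousLinearMap.coe_id',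
    id_eq, ContinuousLinearMap.toSpanSingleton_apply, ContinuousLinearMap.flip_apply,
    minkowskiForm_apply, zero_apply] at hzero_h
  rw [mdot_comm (h - _), mdot_sub_right, mdot_smul_right, mdot_comm (x₀ - _) (v _)] at hzero_h
  linarith

theorem fderiv_retardedDistance_apply {u' : (Fin 4 → ℝ) →L[ℝ] ℝ}
    (hzv : ∀ τ, HasDerivAt z (v τ) τ) (hva : ∀ τ, HasDerivAt v (acc τ) τ)
    (hu : HasFDerivAt u u' x₀) (h : Fin 4 → ℝ) :
    fderiv ℝ (fun x => -mdot (v (u x)) (x - z (u x))) x₀ h =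
      -(u' h * mdot (acc (u x₀)) (x₀ - z (u x₀)) + mdot (v (u x₀)) (h - u' h • v (u x₀))) := by
  have hw : HasFDerivAt (fun x => x - z (u x)) _ x₀ :=
    (hasFDerivAt_id x₀).sub ((hzv (u x₀)).hasFDerivAt.comp x₀ hu)
  have hv : HasFDerivAt (fun x => v (u x)) _ x₀ := (hva (u x₀)).hasFDerivAt.comp x₀ hu
  have hr : HasFDerivAt (fun x => -mdot (v (u x)) (x - z (u x))) _ x₀ := (hv.mdot hw).neg
  rw [hr.fderiv]
  simp only [neg_apply, add_apply, ContinuousLinearMap.comp_apply, sub_apply,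
    ContinuousLinearMap.coe_id', id_eq, ContinuousLinearMap.toSpanSingleton_apply,
    ContinuousLinearMap.flip_apply, minkowskiForm_apply, mdot_smul_left]
  ring

end RetardedTime

theorem retarded_distance_smooth_gradient_general
    (z : ℝ → Fin 4 → ℝ) (hz : ContDiff ℝ (⊤ : ℕ∞) z)
    (v : ℝ → Fin 4 → ℝ) (hv : ∀ τ i, v τ i = deriv (fun t => z t i) τ)
    (acc : ℝ → Fin 4 → ℝ) (hacc : ∀ τ i, acc τ i = deriv (fun t => v t i) τ)
    (hunit : ∀ τ, mdot (v τ) (v τ) = -1)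
    (u : (Fin 4 → ℝ) → ℝ)
    (hu : ∀ x, mdot (x - z (u x)) (x - z (u x)) = 0 ∧ z (u x) 0 ≤ x 0)
    (huniq : ∀ x τ, mdot (x - z τ) (x - z τ) = 0 → z τ 0 ≤ x 0 → τ = u x)
    (r : (Fin 4 → ℝ) → ℝ)
    (hr : ∀ x, r x = -mdot (v (u x)) (x - z (u x)))
    (k : (Fin 4 → ℝ) → Fin 4 → ℝ)
    (hk : ∀ x, k x = (r x)⁻¹ • (x - z (u x))) :
    ContDiffOn ℝ (⊤ : ℕ∞) r {x | 0 < r x} ∧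
    ∀ x ∈ {x : Fin 4 → ℝ | 0 < r x}, ∀ a : Fin 4,
      fderiv ℝ r x (Pi.single a 1) =
        -(lo (v (u x)) a) + (1 + r x * mdot (acc (u x)) (k x)) * lo (k x) a := by
  obtain ⟨hv_smooth, hzv⟩ := hz.contDiff_and_hasDerivAt_of_apply_eq_deriv hv
  have hva := (hv_smooth.contDiff_and_hasDerivAt_of_apply_eq_deriv hacc).2
  have hnull x := (hu x).1
  have hr_fun : r = fun x => -mdot (v (u x)) (x - z (u x)) := funext hr
  have hu_smooth (x : Fin 4 → ℝ) (hx : 0 < r x) : ContDiffAt ℝ (⊤ : ℕ∞) u x := by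
    have hnondeg : mdot (v (u x)) (x - z (u x)) ≠ 0 := by linarith [hr x]
    exact contDiffAt_retardedTime hz (by simp) hzv hnull huniq (hu x).2 hnondeg
  refine ⟨fun x hx => ?_, fun x hx a => ?_⟩
  · exact (hr_fun ▸ contDiffAt_retardedDistance hz hv_smooth (hu_smooth x hx)).contDiffWithinAt
  have hu_deriv := ((hu_smooth x hx).differentiableAt (by simp)).hasFDerivAt
  have hnull_deriv := mdot_mul_fderiv_retardedTime hzv hnull hu_deriv (Pi.single a 1)
  have hgrad := fderiv_retardedDistance_apply hzv hva hu_deriv (Pi.single a 1)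
  have hsep : x - z (u x) = r x • k x := by rw [hk, smul_inv_smul₀ hx.ne']
  have hvk : mdot (v (u x)) (k x) = -1 := by
    have hr_x := hr x
    rw [hsep, mdot_smul_right] at hr_x
    exact mul_left_cancel₀ hx.ne' (by linarith)
  have hu_grad : fderiv ℝ u x (Pi.single a 1) = -mdot (k x) (Pi.single a 1) := by
    rw [hsep, mdot_smul_right, mdot_smul_left, hvk] at hnull_deriv
    exact mul_left_cancel₀ hx.ne' (by linarith)
  rw [← hr_fun] at hgrad
  rw [hgrad, lo_eq_mdot_single, lo_eq_mdot_single, hsep, mdot_sub_right, mdot_smul_right,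
    mdot_smul_right, hunit, hu_grad]
  ring

/-- The retarded distance `r` is smooth on Ω = {x | r x > 0} and its gradient
is `r_{,a} = −v_a + (1 + r a·k) k_a`. -/
theorem retarded_distance_smooth_gradient
    (z : ℝ → Fin 4 → ℝ) (hz : ContDiff ℝ (⊤ : ℕ∞) z)
    (v : ℝ → Fin 4 → ℝ) (hv : ∀ τ i, v τ i = deriv (fun t => z t i) τ)
    (acc : ℝ → Fin 4 → ℝ) (hacc : ∀ τ i, acc τ i = deriv (fun t => v t i) τ)
    (hunit : ∀ τ, mdot (v τ) (v τ) = -1)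
    (hfut : ∀ τ, 0 < v τ 0)
    (u : (Fin 4 → ℝ) → ℝ)
    (hu : ∀ x, mdot (x - z (u x)) (x - z (u x)) = 0 ∧ z (u x) 0 ≤ x 0)
    (huniq : ∀ x τ, mdot (x - z τ) (x - z τ) = 0 → z τ 0 ≤ x 0 → τ = u x)
    (r : (Fin 4 → ℝ) → ℝ)
    (hr : ∀ x, r x = -mdot (v (u x)) (x - z (u x)))
    (k : (Fin 4 → ℝ) → Fin 4 → ℝ)
    (hk : ∀ x, k x = (r x)⁻¹ • (x - z (u x))) :
    ContDiffOn ℝ (⊤ : ℕ∞) r {x | 0 < r x} ∧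
    ∀ x ∈ {x : Fin 4 → ℝ | 0 < r x}, ∀ a : Fin 4,
      fderiv ℝ r x (Pi.single a 1) =
        -(lo (v (u x)) a) + (1 + r x * mdot (acc (u x)) (k x)) * lo (k x) a :=
  retarded_distance_smooth_gradient_general z hz v hv acc hacc hunit u hu huniq r hr k hk
end
end

section
/- (Dipole conservation equation, inertial frame.) For all indices i and m and all u: k_j (d/du)𝒯^{ij}{}_{:m}(u) + 𝒯^i{}_m(u) + k_j 𝒯^{ij}(u) v_m = 0 (sum over j), where 𝒯^i{}_m = η_{ml}𝒯^{il}, v = (1,0,0,0), v_m = η_{ml}v^l = (−1,0,0,0), and k_j = η_{jl}k^l = (−1, n̂). -/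
open scoped BigOperators

noncomputable section

open MeasureTheory

/-- The point of the null hyperplane `P_u = {y : y⁰ = u + n̂·𝐲}` over the
spatial point `𝐲`. -/
def nullPt (n : EuclideanSpace ℝ (Fin 3)) (u : ℝ) (y : EuclideanSpace ℝ (Fin 3)) :
    Fin 4 → ℝ :=
  ![u + ∑ α, n α * y α, y 0, y 1, y 2]

/-- The null vector `k = (1, n̂)`. -/
def kvec (n : EuclideanSpace ℝ (Fin 3)) : Fin 4 → ℝ := ![1, n 0, n 1, n 2]

/-- The retarded monopole moment `𝒯^{ij}(u) = ∫_{P_u} T^{ij}`. -/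
def monopole (T : Fin 4 → Fin 4 → (Fin 4 → ℝ) → ℝ)
    (n : EuclideanSpace ℝ (Fin 3)) (i j : Fin 4) (u : ℝ) : ℝ :=
  ∫ y : EuclideanSpace ℝ (Fin 3), T i j (nullPt n u y)

/-- The lowered components of `ξ = (n̂·𝐲, 𝐲)`: `ξ_0 = −n̂·𝐲`, `ξ_α = y^α`. -/
def xiLo (n : EuclideanSpace ℝ (Fin 3)) (y : EuclideanSpace ℝ (Fin 3)) :
    Fin 4 → ℝ :=
  ![-(∑ α, n α * y α), y 0, y 1, y 2]

/-- The retarded dipole moment `𝒯^{ij}{}_{:m}(u) = ∫_{P_u} T^{ij} ξ_m`. -/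
def dipole (T : Fin 4 → Fin 4 → (Fin 4 → ℝ) → ℝ)
    (n : EuclideanSpace ℝ (Fin 3)) (i j m : Fin 4) (u : ℝ) : ℝ :=
  ∫ y : EuclideanSpace ℝ (Fin 3), T i j (nullPt n u y) * xiLo n y m

/-! Differentiating under the integral sign, `k_j ∂_u 𝒯^{ij}{}_{:m} = ∫ k_j ∂_0 T^{ij} ξ_m`.
Along the null plane the derivative of `𝐲 ↦ T(u + n̂·𝐲, 𝐲)` in the direction `e_α` is `(n_α ∂_0 + ∂_α) T`,
so conservation `∂_0 T^{i0} = -∂_α T^{iα}` turns `k_j ∂_0 T^{ij}` into the spatial divergence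
`∂_{y^α} [T^{iα}(u + n̂·𝐲, 𝐲)]`. Integrating by parts against the linear function `ξ_m` leaves
`-𝒯^{iα} ∂_α ξ_m`, and `∂_α ξ_m` is read off from `ξ = (n̂·𝐲, 𝐲)`: this is exactly
`-(𝒯^i{}_m + k_j 𝒯^{ij} v_m)`. -/

open Filter Metric Set Topology

section IntegralCalculus

variable {E : Type*}

theorem hasDerivAt_integral_of_eq_zero_outside_compact [TopologicalSpace E] [T2Space E]
    [MeasurableSpace E] [OpensMeasurableSpace E]
    {μ : Measure E} [IsFiniteMeasureOnCompacts μ] {h h' : ℝ → E → ℝ}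
    (hh : Continuous (Function.uncurry h)) (hh' : Continuous (Function.uncurry h'))
    (hderiv : ∀ u y, HasDerivAt (h · y) (h' u y) u)
    {K : Set E} (hK : IsCompact K) (hzero : ∀ u, ∀ y ∉ K, h u y = 0) (u₀ : ℝ) :
    HasDerivAt (fun u => ∫ y, h u y ∂μ) (∫ y, h' u₀ y ∂μ) u₀ := by
  have hzero' : ∀ u, ∀ y ∉ K, h' u y = 0 := fun u y hy =>
    (hderiv u y).unique (by simpa [hzero _ y hy] using hasDerivAt_const u (0 : ℝ))
  obtain ⟨M, hM⟩ : ∃ M, ∀ p ∈ closedBall u₀ 1 ×ˢ K, ‖Function.uncurry h' p‖ ≤ M :=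
    ((isCompact_closedBall u₀ 1).prod hK).exists_bound_of_continuousOn hh'.continuousOn
  refine (hasDerivAt_integral_of_dominated_loc_of_deriv_le (bound := K.indicator fun _ => M)
    (ball_mem_nhds u₀ one_pos) (Eventually.of_forall fun u => ?_) ?_ ?_ ?_ ?_ ?_).2
  · exact (hh.comp (Continuous.prodMk_right u)).aestronglyMeasurable
  · refine (hh.comp (Continuous.prodMk_right u₀)).integrable_of_hasCompactSupport ?_
    exact HasCompactSupport.intro hK (hzero u₀)
  · exact (hh'.comp (Continuous.prodMk_right u₀)).aestronglyMeasurable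
  · refine Eventually.of_forall fun y u hu => ?_
    by_cases hy : y ∈ K
    · rw [indicator_of_mem hy]
      exact hM (u, y) ⟨ball_subset_closedBall hu, hy⟩
    · simp [hzero' u y hy, indicator_of_notMem hy]
  · exact (integrable_indicator_iff hK.measurableSet).2 (integrableOn_const hK.measure_lt_top.ne)
  · exact Eventually.of_forall fun y u _ => hderiv u y

theorem integral_fderiv_mul_eq_neg_integral_mul [NormedAddCommGroup E] [NormedSpace ℝ E]
    [FiniteDimensional ℝ E] [MeasurableSpace E] [BorelSpace E] {μ : Measure E}
    [μ.IsAddHaarMeasure] {G : E → ℝ} (hG : ContDiff ℝ 1 G) (hc : HasCompactSupport G)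
    (L : E →L[ℝ] ℝ) (v : E) :
    ∫ y, fderiv ℝ G y v * L y ∂μ = -((∫ y, G y ∂μ) * L v) := by
  have hG' : Continuous fun y => fderiv ℝ G y v :=
    (hG.continuous_fderiv one_ne_zero).clm_apply continuous_const
  have hGL' : Integrable (fun y => G y * fderiv ℝ L y v) μ := by
    simpa only [L.fderiv] using (hG.continuous.integrable_of_hasCompactSupport hc).mul_const (L v)
  have key := integral_mul_fderiv_eq_neg_fderiv_mul_of_integrable (μ := μ) (v := v)
    ((hG'.mul L.continuous).integrable_of_hasCompactSupport (hc.fderiv_apply ℝ v).mul_right) hGL'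
    ((hG.continuous.mul L.continuous).integrable_of_hasCompactSupport hc.mul_right)
    (fun y _ => hG.differentiable one_ne_zero y) (fun y _ => L.differentiableAt)
  simp only [ContinuousLinearMap.fderiv, integral_mul_const] at key
  linarith

end IntegralCalculus

section NullPlane

variable (n : EuclideanSpace ℝ (Fin 3))

/-- The paper's `ξ^i = (n̂·𝐲, 𝐲)`, the point of `P_0` over `𝐲`. -/
def xi : EuclideanSpace ℝ (Fin 3) →L[ℝ] (Fin 4 → ℝ) := LinearMap.toContinuousLinearMap
  { toFun := nullPt n 0
    map_add' := fun y z => by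
      ext x; fin_cases x <;> simp [nullPt, Fin.sum_univ_three]; ring
    map_smul' := fun c y => by
      ext x; fin_cases x <;> simp [nullPt, Fin.sum_univ_three]; ring }

def xiLoCLM (m : Fin 4) : EuclideanSpace ℝ (Fin 3) →L[ℝ] ℝ := LinearMap.toContinuousLinearMap
  { toFun := fun y => xiLo n y m
    map_add' := fun y z => by fin_cases m <;> simp [xiLo, Fin.sum_univ_three]; ring
    map_smul' := fun c y => by fin_cases m <;> simp [xiLo, Fin.sum_univ_three]; ring }

@[simp]
theorem xiLoCLM_apply (m : Fin 4) (y : EuclideanSpace ℝ (Fin 3)) : xiLoCLM n m y = xiLo n y m :=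
  rfl

theorem nullPt_eq_smul_add_xi (u : ℝ) (y : EuclideanSpace ℝ (Fin 3)) :
    nullPt n u y = u • Pi.single 0 1 + xi n y := by
  ext x; fin_cases x <;> simp [xi, nullPt]

theorem xi_single (α : Fin 3) :
    xi n (EuclideanSpace.single α 1) = n α • Pi.single 0 1 + Pi.single α.succ 1 := by
  ext x; fin_cases x <;> fin_cases α <;> simp [xi, nullPt]

theorem nullPt_spatial_sq (u : ℝ) (y : EuclideanSpace ℝ (Fin 3)) :
    nullPt n u y 1 ^ 2 + nullPt n u y 2 ^ 2 + nullPt n u y 3 ^ 2 = ‖y‖ ^ 2 := by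
  rw [EuclideanSpace.norm_eq, Real.sq_sqrt (by positivity)]
  simp [nullPt, Fin.sum_univ_three]

theorem continuous_nullPt :
    Continuous fun p : ℝ × EuclideanSpace ℝ (Fin 3) => nullPt n p.1 p.2 := by
  simp only [nullPt_eq_smul_add_xi]
  fun_prop

variable {n} {f : (Fin 4 → ℝ) → ℝ} {u : ℝ} {y : EuclideanSpace ℝ (Fin 3)}

theorem hasDerivAt_comp_nullPt (hf : DifferentiableAt ℝ f (nullPt n u y)) :
    HasDerivAt (fun s => f (nullPt n s y)) (fderiv ℝ f (nullPt n u y) (Pi.single 0 1)) u := by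
  have hline : HasDerivAt (fun s => nullPt n s y) (Pi.single 0 1) u := by
    simp only [nullPt_eq_smul_add_xi]
    simpa using ((hasDerivAt_id' u).smul_const (Pi.single 0 1 : Fin 4 → ℝ)).add_const (xi n y)
  exact hf.hasFDerivAt.comp_hasDerivAt u hline

theorem hasFDerivAt_comp_nullPt (hf : DifferentiableAt ℝ f (nullPt n u y)) :
    HasFDerivAt (fun z => f (nullPt n u z)) ((fderiv ℝ f (nullPt n u y)).comp (xi n)) y := by
  simp only [nullPt_eq_smul_add_xi] at hf ⊢
  exact hf.hasFDerivAt.comp y ((xi n).hasFDerivAt.const_add _)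

end NullPlane

/-- The inequality is strict so that the region is open and `fderiv` also vanishes there. -/
def VanishesOutsideCylinder (r : ℝ) (f : (Fin 4 → ℝ) → ℝ) : Prop :=
  ∀ x : Fin 4 → ℝ, r ^ 2 < x 1 ^ 2 + x 2 ^ 2 + x 3 ^ 2 → f x = 0

namespace VanishesOutsideCylinder

variable {r : ℝ} {f : (Fin 4 → ℝ) → ℝ}

theorem fderiv_apply (hf : VanishesOutsideCylinder r f) (v : Fin 4 → ℝ) :
    VanishesOutsideCylinder r fun x => fderiv ℝ f x v := by
  intro x hx
  have hopen : IsOpen {x : Fin 4 → ℝ | r ^ 2 < x 1 ^ 2 + x 2 ^ 2 + x 3 ^ 2} :=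
    isOpen_lt continuous_const (by fun_prop)
  have hf0 : f =ᶠ[𝓝 x] fun _ => 0 := eventually_of_mem (hopen.mem_nhds hx) hf
  simp [hf0.fderiv_eq]

theorem comp_nullPt (hf : VanishesOutsideCylinder r f) (n : EuclideanSpace ℝ (Fin 3)) (u : ℝ) :
    ∀ y ∉ closedBall (0 : EuclideanSpace ℝ (Fin 3)) |r|, f (nullPt n u y) = 0 := by
  intro y hy
  apply hf
  rw [nullPt_spatial_sq, sq_lt_sq, abs_norm]
  simpa using hy

theorem hasCompactSupport_comp_nullPt (hf : VanishesOutsideCylinder r f)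
    (n : EuclideanSpace ℝ (Fin 3)) (u : ℝ) : HasCompactSupport fun y => f (nullPt n u y) :=
  HasCompactSupport.intro (isCompact_closedBall 0 |r|) (hf.comp_nullPt n u)

end VanishesOutsideCylinder

section Moments

variable {n : EuclideanSpace ℝ (Fin 3)} {f : (Fin 4 → ℝ) → ℝ} {r : ℝ}

theorem hasDerivAt_integral_comp_nullPt_mul (hf : ContDiff ℝ 1 f)
    (hsupp : VanishesOutsideCylinder r f) {ψ : EuclideanSpace ℝ (Fin 3) → ℝ}
    (hψ : Continuous ψ) (u : ℝ) :
    HasDerivAt (fun s => ∫ y, f (nullPt n s y) * ψ y)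
      (∫ y, fderiv ℝ f (nullPt n u y) (Pi.single 0 1) * ψ y) u := by
  refine hasDerivAt_integral_of_eq_zero_outside_compact (h' := fun s y =>
      fderiv ℝ f (nullPt n s y) (Pi.single 0 1) * ψ y) ?_ ?_
    (fun s y => (hasDerivAt_comp_nullPt (hf.differentiable one_ne_zero _)).mul_const (ψ y))
    (isCompact_closedBall 0 |r|) (fun s y hy => by simp [hsupp.comp_nullPt n s y hy]) u
  · exact (hf.continuous.comp (continuous_nullPt n)).mul (hψ.comp continuous_snd)
  · exact (((hf.continuous_fderiv one_ne_zero).comp (continuous_nullPt n)).clm_apply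
      continuous_const).mul (hψ.comp continuous_snd)

theorem integrable_fderiv_comp_nullPt_mul (hf : ContDiff ℝ 1 f)
    (hsupp : VanishesOutsideCylinder r f) (v : Fin 4 → ℝ) {ψ : EuclideanSpace ℝ (Fin 3) → ℝ}
    (hψ : Continuous ψ) (u : ℝ) :
    Integrable fun y => fderiv ℝ f (nullPt n u y) v * ψ y := by
  refine Continuous.integrable_of_hasCompactSupport ?_
    ((hsupp.fderiv_apply v).hasCompactSupport_comp_nullPt n u).mul_right
  exact (((hf.continuous_fderiv one_ne_zero).comp ((continuous_nullPt n).comp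
    (Continuous.prodMk_right u))).clm_apply continuous_const).mul hψ

theorem integral_fderiv_comp_nullPt_xi_mul_xiLo (hf : ContDiff ℝ 1 f)
    (hsupp : VanishesOutsideCylinder r f) (u : ℝ) (v : EuclideanSpace ℝ (Fin 3)) (m : Fin 4) :
    ∫ y, fderiv ℝ f (nullPt n u y) (xi n v) * xiLo n y m
      = -((∫ y, f (nullPt n u y)) * xiLo n v m) := by
  have hG : ContDiff ℝ 1 fun y => f (nullPt n u y) := by
    simp only [nullPt_eq_smul_add_xi]
    exact hf.comp (contDiff_const.add (xi n).contDiff)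
  have hderiv : ∀ y,
      fderiv ℝ (fun z => f (nullPt n u z)) y v = fderiv ℝ f (nullPt n u y) (xi n v) :=
    fun y => by rw [(hasFDerivAt_comp_nullPt (hf.differentiable one_ne_zero _)).fderiv]; rfl
  simpa [hderiv] using integral_fderiv_mul_eq_neg_integral_mul hG
    (hsupp.hasCompactSupport_comp_nullPt n u) (xiLoCLM n m) v

end Moments

section Algebra

variable (n : EuclideanSpace ℝ (Fin 3))

theorem sum_lo_kvec_mul_eq_sum_apply_xi_single {D : Fin 4 → (Fin 4 → ℝ) →L[ℝ] ℝ}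
    (hD : ∑ j, D j (Pi.single j 1) = 0) :
    ∑ j, lo (kvec n) j * D j (Pi.single 0 1)
      = ∑ α : Fin 3, D α.succ (xi n (EuclideanSpace.single α 1)) := by
  simp [xi_single, Fin.sum_univ_four, Fin.sum_univ_three, lo, eta, kvec] at hD ⊢
  linear_combination -hD

theorem sum_mul_xiLo_single (M : Fin 4 → ℝ) (m : Fin 4) :
    ∑ α : Fin 3, M α.succ * xiLo n (EuclideanSpace.single α 1) m
      = ∑ l, eta m l * M l + (∑ j, lo (kvec n) j * M j) * lo ![1, 0, 0, 0] m := by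
  fin_cases m <;> simp [xiLo, lo, eta, kvec, Fin.sum_univ_four, Fin.sum_univ_three]; ring

end Algebra

theorem dipole_conservation_general
    (T : Fin 4 → Fin 4 → (Fin 4 → ℝ) → ℝ)
    (hTsmooth : ∀ i j, ContDiff ℝ (⊤ : ℕ∞) (T i j))
    (hTcons : ∀ i y, ∑ j, fderiv ℝ (T i j) y (Pi.single j 1) = 0)
    (R : ℝ)
    (hsupp : ∀ i j (y : Fin 4 → ℝ),
      R ^ 2 ≤ (y 1) ^ 2 + (y 2) ^ 2 + (y 3) ^ 2 → T i j y = 0)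
    (n : EuclideanSpace ℝ (Fin 3)) :
    ∀ (i m : Fin 4) (u : ℝ),
      ∑ j, lo (kvec n) j * deriv (fun s => dipole T n i j m s) u
        + (∑ l, eta m l * monopole T n i l u)
        + (∑ j, lo (kvec n) j * monopole T n i j u) * lo ![1, 0, 0, 0] m = 0 := by
  intro i m u
  have hC1 : ∀ j, ContDiff ℝ 1 (T i j) := fun j => (hTsmooth i j).of_le (by exact_mod_cast le_top)
  have hcyl : ∀ j, VanishesOutsideCylinder R (T i j) := fun j x hx => hsupp i j x hx.le
  have hξ : Continuous fun y => xiLo n y m := (xiLoCLM n m).continuous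
  have hderiv : ∀ j, deriv (fun s => dipole T n i j m s) u
      = ∫ y, fderiv ℝ (T i j) (nullPt n u y) (Pi.single 0 1) * xiLo n y m :=
    fun j => (hasDerivAt_integral_comp_nullPt_mul (hC1 j) (hcyl j) hξ u).deriv
  have hdiv : ∀ y,
      ∑ j, lo (kvec n) j * (fderiv ℝ (T i j) (nullPt n u y) (Pi.single 0 1) * xiLo n y m)
      = ∑ α : Fin 3, fderiv ℝ (T i α.succ) (nullPt n u y) (xi n (EuclideanSpace.single α 1))
          * xiLo n y m := by
    intro y
    simp only [← mul_assoc, ← Finset.sum_mul]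
    rw [sum_lo_kvec_mul_eq_sum_apply_xi_single n (hTcons i _)]
  have hflux : ∑ j, lo (kvec n) j * deriv (fun s => dipole T n i j m s) u
      = -∑ α : Fin 3, monopole T n i α.succ u * xiLo n (EuclideanSpace.single α 1) m := by
    simp only [hderiv, ← integral_const_mul]
    rw [← integral_finsetSum _ fun j _ =>
      (integrable_fderiv_comp_nullPt_mul (hC1 j) (hcyl j) _ hξ u).const_mul _]
    simp only [hdiv]
    rw [integral_finsetSum _ fun α _ =>
      integrable_fderiv_comp_nullPt_mul (hC1 _) (hcyl _) _ hξ u, ← Finset.sum_neg_distrib]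
    exact Finset.sum_congr rfl fun α _ =>
      integral_fderiv_comp_nullPt_xi_mul_xiLo (hC1 _) (hcyl _) u _ m
  linarith [sum_mul_xiLo_single n (monopole T n i · u) m]

/-- Dipole conservation equation:
`k_j (d/du)𝒯^{ij}{}_{:m} + 𝒯^i{}_m + k_j 𝒯^{ij} v_m = 0` with `v = (1,0,0,0)`. -/
theorem dipole_conservation
    (T : Fin 4 → Fin 4 → (Fin 4 → ℝ) → ℝ)
    (hTsmooth : ∀ i j, ContDiff ℝ (⊤ : ℕ∞) (T i j))
    (hTsymm : ∀ i j y, T i j y = T j i y)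
    (hTcons : ∀ i y, ∑ j, fderiv ℝ (T i j) y (Pi.single j 1) = 0)
    (R : ℝ) (hR : 0 < R)
    (hsupp : ∀ i j (y : Fin 4 → ℝ),
      R ^ 2 ≤ (y 1) ^ 2 + (y 2) ^ 2 + (y 3) ^ 2 → T i j y = 0)
    (n : EuclideanSpace ℝ (Fin 3)) (hn : ‖n‖ = 1) :
    ∀ (i m : Fin 4) (u : ℝ),
      ∑ j, lo (kvec n) j * deriv (fun s => dipole T n i j m s) u
        + (∑ l, eta m l * monopole T n i l u)
        + (∑ j, lo (kvec n) j * monopole T n i j u) * lo ![1, 0, 0, 0] m = 0 :=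
  dipole_conservation_general T hTsmooth hTcons R hsupp n
end
end

section
/- (The total radiated 4-momentum is future-pointing and causal.) Let (Ω, μ) be a finite measure space, let n̂ : Ω → ℝ³ be measurable with |n̂(ω)| = 1 for all ω, and set k(ω) = (1, n̂(ω)) ∈ ℝ⁴ (a future-pointing null vector). Let A : Ω → (real symmetric 4×4 matrices) be measurable with A(ω)_{ij} k(ω)^j = 0 for all i and ω (sum over j), such that the scalar F(ω) = A_{mn}A^{mn} − ½(A^m{}_m)² (computed with η-raised indices) is μ-integrable. Then the vector P whose components are P^i = ∫_Ω F(ω) k(ω)^i dμ(ω) satisfies P⁰ ≥ 0 and η_{ij}P^iP^j ≤ 0; i.e. P is a future-pointing causal vector. -/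
open scoped BigOperators

noncomputable section

open MeasureTheory
open Matrix

/-! Eliminating the time components of `A` with `A k = 0`, the density `F` becomes the squared
Frobenius norm of the transverse-traceless part `Q S Q - ½ tr(S Q) Q` of the spatial block `S`,
where `Q = 1 - n̂ n̂ᵀ` projects onto the plane orthogonal to `n̂`; hence `F ≥ 0`. Then
`P⁰ = ∫ F` and, since `|n̂| = 1`, the spatial part `∫ F n̂` has norm at most `∫ F = P⁰`. -/

namespace Matrix

variable {ι : Type*}

def transverseProjector [DecidableEq ι] (v : ι → ℝ) : Matrix ι ι ℝ := 1 - vecMulVec v v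

theorem isSymm_transverseProjector [DecidableEq ι] (v : ι → ℝ) :
    (transverseProjector v).IsSymm :=
  isSymm_one.sub (transpose_vecMulVec v v)

variable [Fintype ι]

theorem isIdempotentElem_transverseProjector [DecidableEq ι] {v : ι → ℝ} (hv : v ⬝ᵥ v = 1) :
    IsIdempotentElem (transverseProjector v) :=
  IsIdempotentElem.one_sub (by rw [IsIdempotentElem, vecMulVec_mul_vecMulVec, hv, one_smul])

theorem trace_transverseProjector [DecidableEq ι] (v : ι → ℝ) :
    trace (transverseProjector v) = Fintype.card ι - v ⬝ᵥ v := by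
  rw [transverseProjector, trace_sub, trace_one, trace_vecMulVec]

/-- The transverse-traceless part of `S` relative to a projector `Q` of trace `2`. -/
def ttPart (Q S : Matrix ι ι ℝ) : Matrix ι ι ℝ := Q * S * Q - (trace (S * Q) / 2) • Q

theorem trace_ttPart_mul_self {Q : Matrix ι ι ℝ} (hQ : IsIdempotentElem Q) (htr : trace Q = 2)
    (S : Matrix ι ι ℝ) :
    trace (ttPart Q S * ttPart Q S) = trace (S * Q * S * Q) - trace (S * Q) ^ 2 / 2 := by
  have hQQ : ∀ X : Matrix ι ι ℝ, Q * (Q * X) = Q * X := fun X => by rw [← mul_assoc, hQ.eq]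
  have hQT : Q * (Q * S * Q) = Q * S * Q := by simp only [mul_assoc, hQQ]
  have hTQ : Q * S * Q * Q = Q * S * Q := by rw [mul_assoc, hQ.eq]
  have htrT : trace (Q * S * Q) = trace (S * Q) := by
    rw [mul_assoc, trace_mul_comm, mul_assoc, hQ.eq]
  have htrTT : trace (Q * S * Q * (Q * S * Q)) = trace (S * Q * S * Q) := by
    have : Q * S * Q * (Q * S * Q) = Q * (S * Q * S * Q) := by simp only [mul_assoc, hQQ]
    rw [this, trace_mul_comm, mul_assoc, hQ.eq]
  simp only [ttPart, sub_mul, mul_sub, Matrix.smul_mul, Matrix.mul_smul, hQT, hTQ, hQ.eq, trace_sub,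
    trace_smul, htrT, htrTT, htr, smul_eq_mul]
  ring

theorem IsSymm.ttPart {Q S : Matrix ι ι ℝ} (hQ : Q.IsSymm) (hS : S.IsSymm) :
    (ttPart Q S).IsSymm := by
  simp only [IsSymm, Matrix.ttPart, transpose_sub, transpose_smul, transpose_mul, hQ.eq, hS.eq,
    mul_assoc]

theorem trace_ttPart_mul_self_nonneg {Q S : Matrix ι ι ℝ} (hQ : Q.IsSymm) (hS : S.IsSymm) :
    0 ≤ trace (ttPart Q S * ttPart Q S) := by
  have h := (posSemidef_conjTranspose_mul_self (ttPart Q S)).trace_nonneg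
  rwa [conjTranspose_eq_transpose_of_trivial, (hQ.ttPart hS).eq] at h

end Matrix

theorem mdot_self (a : Fin 4 → ℝ) : mdot a a = -a 0 ^ 2 + Fin.tail a ⬝ᵥ Fin.tail a := by
  simp only [mdot, eta, Fin.isValue, ite_mul, neg_mul, one_mul, zero_mul, Finset.sum_ite_eq,
    Finset.mem_univ, ↓reduceIte, Fin.sum_univ_four, one_ne_zero, Fin.reduceEq, dotProduct,
    Fin.tail, Fin.sum_univ_three, Fin.succ_zero_eq_one, Fin.succ_one_eq_two, Fin.reduceSucc]
  ring

def radiationDensity (A : Fin 4 → Fin 4 → ℝ) : ℝ :=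
  (∑ m, ∑ p, (∑ a, ∑ b, eta m a * eta p b * A a b) * A m p)
    - (1 / 2) * (∑ m, ∑ a, eta m a * A a m) ^ 2

theorem radiationDensity_eq_trace_ttPart_mul_self {A : Fin 4 → Fin 4 → ℝ} {k : Fin 4 → ℝ}
    (hA : ∀ i j, A i j = A j i) (hk0 : k 0 = 1) (hk : mdot k k = 0)
    (hAk : ∀ i, ∑ j, A i j * k j = 0) :
    radiationDensity A =
      trace (ttPart (transverseProjector (Fin.tail k)) ((of A).submatrix Fin.succ Fin.succ) *
        ttPart (transverseProjector (Fin.tail k)) ((of A).submatrix Fin.succ Fin.succ)) := by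
  have hv : Fin.tail k ⬝ᵥ Fin.tail k = 1 := by rw [mdot_self, hk0] at hk; linarith
  rw [trace_ttPart_mul_self (isIdempotentElem_transverseProjector hv)
    (by rw [trace_transverseProjector, hv]; norm_num)]
  have hcol : ∀ i, A i 0 = -(A i 1 * k 1 + A i 2 * k 2 + A i 3 * k 3) := fun i => by
    have := hAk i; rw [Fin.sum_univ_four, hk0] at this; linarith
  have h00 := hcol 0
  rw [hA 0 1, hA 0 2, hA 0 3, hcol 1, hcol 2, hcol 3] at h00
  simp only [radiationDensity, transverseProjector, eta, Fin.isValue, mul_ite, mul_neg, mul_one,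
    mul_zero, ite_mul, neg_mul, one_mul, zero_mul, Finset.sum_ite_eq, Finset.mem_univ, ↓reduceIte,
    Finset.sum_ite_irrel, Finset.sum_neg_distrib, Fin.sum_univ_four, one_ne_zero, Fin.reduceEq,
    neg_neg, one_div, trace, Nat.reduceAdd, diag_apply, mul_apply, submatrix_apply, of_apply,
    Matrix.sub_apply, one_apply, vecMulVec_apply, Fin.tail, Fin.sum_univ_three,
    Fin.succ_zero_eq_one, Fin.succ_one_eq_two, Fin.reduceSucc, zero_sub, zero_ne_one]
  rw [hA 0 1, hA 0 2, hA 0 3, h00, hcol 1, hcol 2, hcol 3, hA 2 1, hA 3 1, hA 3 2]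
  ring

theorem radiationDensity_nonneg {A : Fin 4 → Fin 4 → ℝ} {k : Fin 4 → ℝ}
    (hA : ∀ i j, A i j = A j i) (hk0 : k 0 = 1) (hk : mdot k k = 0)
    (hAk : ∀ i, ∑ j, A i j * k j = 0) :
    0 ≤ radiationDensity A := by
  rw [radiationDensity_eq_trace_ttPart_mul_self hA hk0 hk hAk]
  exact trace_ttPart_mul_self_nonneg (isSymm_transverseProjector _)
    (IsSymm.submatrix (IsSymm.ext fun i j => hA j i) _)

theorem sum_sq_integral_mul_le_sq_integral {Ω ι : Type*} [MeasurableSpace Ω] [Fintype ι]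
    {μ : Measure Ω} {f : Ω → ℝ} {u : Ω → EuclideanSpace ℝ ι} (hf : Integrable f μ)
    (hf0 : ∀ ω, 0 ≤ f ω) (hu : AEStronglyMeasurable u μ) (hu1 : ∀ ω, ‖u ω‖ ≤ 1) :
    ∑ i, (∫ ω, f ω * u ω i ∂μ) ^ 2 ≤ (∫ ω, f ω ∂μ) ^ 2 := by
  have hnorm : ∀ ω, ‖f ω • u ω‖ ≤ f ω := fun ω => by
    rw [norm_smul, Real.norm_of_nonneg (hf0 ω)]; exact mul_le_of_le_one_right (hf0 ω) (hu1 ω)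
  have hint : Integrable (fun ω => f ω • u ω) μ :=
    hf.mono' (hf.aestronglyMeasurable.smul hu) (.of_forall hnorm)
  have hcoord : ∀ i, ∫ ω, f ω * u ω i ∂μ = (∫ ω, f ω • u ω ∂μ) i := fun i => by
    simpa using (EuclideanSpace.proj i).integral_comp_comm hint
  have hle : ‖∫ ω, f ω • u ω ∂μ‖ ≤ ∫ ω, f ω ∂μ :=
    norm_integral_le_of_norm_le hf (.of_forall hnorm)
  simp only [hcoord, ← EuclideanSpace.real_norm_sq_eq]
  exact pow_le_pow_left₀ (norm_nonneg _) hle 2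

theorem radiated_four_momentum_future_causal_general
    {Ω : Type*} [MeasurableSpace Ω] (μ : Measure Ω)
    (n : Ω → EuclideanSpace ℝ (Fin 3)) (hn_meas : Measurable n)
    (hn : ∀ ω, ‖n ω‖ = 1)
    (k : Ω → Fin 4 → ℝ) (hk : ∀ ω, k ω = ![1, n ω 0, n ω 1, n ω 2])
    (A : Ω → Fin 4 → Fin 4 → ℝ)
    (hAsymm : ∀ ω i j, A ω i j = A ω j i)
    (hAk : ∀ ω i, ∑ j, A ω i j * k ω j = 0)
    (F : Ω → ℝ)
    (hF : ∀ ω, F ω =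
      (∑ m, ∑ p, (∑ a, ∑ b, eta m a * eta p b * A ω a b) * A ω m p)
        - (1 / 2) * (∑ m, ∑ a, eta m a * A ω a m) ^ 2)
    (hFint : Integrable F μ)
    (P : Fin 4 → ℝ) (hP : ∀ i, P i = ∫ ω, F ω * k ω i ∂μ) :
    0 ≤ P 0 ∧ ∑ i, ∑ j, eta i j * P i * P j ≤ 0 := by
  have hk0 : ∀ ω, k ω 0 = 1 := fun ω => by rw [hk ω]; rfl
  have hkn : ∀ ω, Fin.tail (k ω) = n ω := fun ω => by
    rw [hk ω]; ext i; fin_cases i <;> rfl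
  have hnull : ∀ ω, mdot (k ω) (k ω) = 0 := fun ω => by
    rw [mdot_self, hk0, hkn, dotProduct]
    simp only [← sq, ← EuclideanSpace.real_norm_sq_eq, hn]
    norm_num
  have hF0 : ∀ ω, 0 ≤ F ω := fun ω =>
    (hF ω).symm ▸ radiationDensity_nonneg (hAsymm ω) (hk0 ω) (hnull ω) (hAk ω)
  have hP0 : P 0 = ∫ ω, F ω ∂μ := by simp only [hP, hk0, mul_one]
  have hPs : ∀ i : Fin 3, P i.succ = ∫ ω, F ω * n ω i ∂μ := fun i => by
    rw [hP]; congr 1; ext ω; rw [← hkn ω]; rfl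
  refine ⟨hP0 ▸ integral_nonneg hF0, ?_⟩
  change mdot P P ≤ 0
  have hspatial := sum_sq_integral_mul_le_sq_integral hFint hF0 hn_meas.aestronglyMeasurable
    fun ω => (hn ω).le
  rw [mdot_self, hP0]
  simp only [dotProduct, Fin.tail, hPs, ← sq]
  linarith

/-- The total radiated 4-momentum
`P^i = ∫ F(ω) k(ω)^i dμ(ω)`, with `k(ω) = (1, n̂(ω))` null and future-pointing
and `F = A_{mn}A^{mn} − ½(A^m{}_m)²` for symmetric `A` with `A_{ij}k^j = 0`,
is a future-pointing causal vector: `P⁰ ≥ 0` and `η_{ij}P^iP^j ≤ 0`. -/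
theorem radiated_four_momentum_future_causal
    {Ω : Type*} [MeasurableSpace Ω] (μ : Measure Ω) [IsFiniteMeasure μ]
    (n : Ω → EuclideanSpace ℝ (Fin 3)) (hn_meas : Measurable n)
    (hn : ∀ ω, ‖n ω‖ = 1)
    (k : Ω → Fin 4 → ℝ) (hk : ∀ ω, k ω = ![1, n ω 0, n ω 1, n ω 2])
    (A : Ω → Fin 4 → Fin 4 → ℝ) (hA_meas : Measurable A)
    (hAsymm : ∀ ω i j, A ω i j = A ω j i)
    (hAk : ∀ ω i, ∑ j, A ω i j * k ω j = 0)
    (F : Ω → ℝ)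
    (hF : ∀ ω, F ω =
      (∑ m, ∑ p, (∑ a, ∑ b, eta m a * eta p b * A ω a b) * A ω m p)
        - (1 / 2) * (∑ m, ∑ a, eta m a * A ω a m) ^ 2)
    (hFint : Integrable F μ)
    (P : Fin 4 → ℝ) (hP : ∀ i, P i = ∫ ω, F ω * k ω i ∂μ) :
    0 ≤ P 0 ∧ ∑ i, ∑ j, eta i j * P i * P j ≤ 0 :=
  radiated_four_momentum_future_causal_general μ n hn_meas hn k hk A hAsymm hAk F hF hFint P hP
end
end
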